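/- arXiv:1806.08142 — 2 statements merged into one kernel-verified Lean document; each statement's English description precedes it below -/
import Mathlib

section
/- Let π be a Poisson tensor on ℝ^N that does not depend on the variable x_p for some fixed 1 ≤ p ≤ N, and let c be a Casimir function for π. Then the 2N×2N antisymmetric matrix field on ℝ^{2N} given in blocks by Π^{xx}(x,y) = 0, Π^{xy}(x,y) = π(x) + c(x)·E_pp, Π^{yx}(x,y) = π(x) − c(x)·E_pp, Π^{yy}(x,y) = ∑_{s=1}^N (∂π/∂x_s)(x) y_s is a Poisson tensor on ℝ^{2N} (denoted Π_{TM,c(x)}). -/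
open scoped ContDiff

/-- Partial derivative `∂f/∂z_s` at `z`, for functions on `ℝ^ι`. -/
noncomputable def pd {ι : Type} [Fintype ι] [DecidableEq ι]
    (s : ι) (f : (ι → ℝ) → ℝ) (x : ι → ℝ) : ℝ :=
  fderiv ℝ f x (Pi.single s 1)

/-- A Poisson tensor on `ℝ^ι`: a smooth antisymmetric matrix field satisfying the
Jacobi condition. -/
def IsPoissonTensor {ι : Type} [Fintype ι] [DecidableEq ι]
    (π : (ι → ℝ) → Matrix ι ι ℝ) : Prop :=
  (∀ i j, ContDiff ℝ ∞ fun x => π x i j) ∧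
  (∀ x i j, π x j i = - π x i j) ∧
  (∀ x i j k, ∑ s, (pd s (fun y => π y i j) x * π x s k
      + pd s (fun y => π y k i) x * π x s j
      + pd s (fun y => π y j k) x * π x s i) = 0)

/-- `c` is a (smooth) Casimir function for `π`. -/
def IsCasimir {ι : Type} [Fintype ι] [DecidableEq ι]
    (π : (ι → ℝ) → Matrix ι ι ℝ) (c : (ι → ℝ) → ℝ) : Prop :=
  ContDiff ℝ ∞ c ∧ ∀ x j, ∑ s, pd s c x * π x s j = 0

/-- The matrix of partial derivatives `(∂π_{ij}/∂x_s)(x)`. -/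
noncomputable def pdMat {N : ℕ} (s : Fin N)
    (π : (Fin N → ℝ) → Matrix (Fin N) (Fin N) ℝ) (x : Fin N → ℝ) :
    Matrix (Fin N) (Fin N) ℝ :=
  Matrix.of fun i j => pd s (fun y => π y i j) x

/-- The `x`-part of a point `z = (x,y) ∈ ℝ^{2N}`. -/
def Xc {N : ℕ} (z : (Fin N ⊕ Fin N) → ℝ) : Fin N → ℝ := fun i => z (Sum.inl i)

/-- The `y`-part of a point `z = (x,y) ∈ ℝ^{2N}`. -/
def Yc {N : ℕ} (z : (Fin N ⊕ Fin N) → ℝ) : Fin N → ℝ := fun i => z (Sum.inr i)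

/-!
The entries of the `xx`, `xy` and `yx` blocks depend on `x` only, and the `yy` block is the
derivative of `π` in the direction `y`. The Jacobiator is invariant under cyclic permutations of
its indices, so only the index types `(x,x,x)`, `(x,x,y)`, `(x,y,y)` and `(y,y,y)` need to be
checked. The first two vanish because `Π^{xx} = 0` and `Π^{xy}`, `Π^{yx}` do not depend on `y`.
For `(x,y,y)` the Jacobiator is that of `π`, plus `c ∂_p π` terms (zero because `π` does not
depend on `x_p`), plus `∂c · π` terms (zero because `c` is a Casimir), plus `c ∂c` terms that
cancel because `E_pp = e_p e_pᵀ` has rank one. For `(y,y,y)`, by the symmetry of second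
derivatives it is the derivative along `y` of the Jacobiator of `π`, plus `c` times derivatives
along `y` of `∂_p π`, and both vanish identically.
-/

section PartialDerivative

variable {ι : Type} [Fintype ι] [DecidableEq ι]

@[simp] lemma fderiv_apply_single_eq_pd (s : ι) (f : (ι → ℝ) → ℝ) (x : ι → ℝ) :
    fderiv ℝ f x (Pi.single s 1) = pd s f x :=
  rfl

lemma sum_mul_pd (v : ι → ℝ) (f : (ι → ℝ) → ℝ) (x : ι → ℝ) :
    ∑ s, v s * pd s f x = fderiv ℝ f x v := by
  conv_rhs => rw [← Finset.univ_sum_single v, map_sum]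
  refine Finset.sum_congr rfl fun s _ => ?_
  rw [pd, ← smul_eq_mul, ← map_smul, ← Pi.single_smul', smul_eq_mul, mul_one]

lemma contDiff_pd {m n : WithTop ℕ∞} {f : (ι → ℝ) → ℝ} (s : ι) (hf : ContDiff ℝ n f)
    (hmn : m + 1 ≤ n) : ContDiff ℝ m (pd s f) :=
  (hf.fderiv_right hmn).clm_apply contDiff_const

end PartialDerivative

noncomputable def jacobiator {ι : Type} [Fintype ι] [DecidableEq ι]
    (π : (ι → ℝ) → Matrix ι ι ℝ) (x : ι → ℝ) (i j k : ι) : ℝ :=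
  ∑ s, (pd s (fun y => π y i j) x * π x s k + pd s (fun y => π y k i) x * π x s j
      + pd s (fun y => π y j k) x * π x s i)

section Jacobiator

variable {ι : Type} [Fintype ι] [DecidableEq ι] {π : (ι → ℝ) → Matrix ι ι ℝ}

lemma isPoissonTensor_iff : IsPoissonTensor π ↔ (∀ i j, ContDiff ℝ ∞ fun x => π x i j) ∧
    (∀ x i j, π x j i = -π x i j) ∧ ∀ x i j k, jacobiator π x i j k = 0 :=
  Iff.rfl

lemma IsPoissonTensor.contDiff (hπ : IsPoissonTensor π) {n : WithTop ℕ∞} [ENat.LEInfty n]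
    (i j : ι) : ContDiff ℝ n fun x => π x i j :=
  (hπ.1 i j).of_le ENat.LEInfty.out

lemma IsPoissonTensor.apply_swap (hπ : IsPoissonTensor π) (x : ι → ℝ) (i j : ι) :
    π x j i = -π x i j :=
  hπ.2.1 x i j

lemma IsPoissonTensor.jacobiator_eq_zero (hπ : IsPoissonTensor π) (x : ι → ℝ) (i j k : ι) :
    jacobiator π x i j k = 0 :=
  hπ.2.2 x i j k

lemma IsCasimir.contDiff {c : (ι → ℝ) → ℝ} (hc : IsCasimir π c) {n : WithTop ℕ∞}
    [ENat.LEInfty n] : ContDiff ℝ n c :=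
  hc.1.of_le ENat.LEInfty.out

lemma jacobiator_cycle (x : ι → ℝ) (i j k : ι) :
    jacobiator π x i j k = jacobiator π x j k i :=
  Finset.sum_congr rfl fun _ _ => by ring

lemma fderiv_jacobiator_apply (hπ : ∀ i j, ContDiff ℝ 2 fun x => π x i j) (x v : ι → ℝ)
    (i j k : ι) :
    fderiv ℝ (fun x => jacobiator π x i j k) x v
      = ∑ s, (fderiv ℝ (pd s fun y => π y i j) x v * π x s k
          + pd s (fun y => π y i j) x * fderiv ℝ (fun y => π y s k) x v
        + (fderiv ℝ (pd s fun y => π y k i) x v * π x s j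
          + pd s (fun y => π y k i) x * fderiv ℝ (fun y => π y s j) x v)
        + (fderiv ℝ (pd s fun y => π y j k) x v * π x s i
          + pd s (fun y => π y j k) x * fderiv ℝ (fun y => π y s i) x v)) := by
  have hd : ∀ a b, Differentiable ℝ fun x => π x a b :=
    fun a b => (hπ a b).differentiable two_ne_zero
  have hpd : ∀ s a b, Differentiable ℝ (pd s fun x => π x a b) :=
    fun s a b => (contDiff_pd s (hπ a b) (m := 1) (by norm_num)).differentiable one_ne_zero
  unfold jacobiator
  rw [fderiv_fun_sum fun s _ => by fun_prop]
  simp only [FunLike.coe_sum, Finset.sum_apply]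
  refine Finset.sum_congr rfl fun s _ => ?_
  rw [fderiv_fun_add (by fun_prop) (by fun_prop), fderiv_fun_add (by fun_prop) (by fun_prop),
    fderiv_fun_mul (by fun_prop) (by fun_prop), fderiv_fun_mul (by fun_prop) (by fun_prop),
    fderiv_fun_mul (by fun_prop) (by fun_prop)]
  simp only [add_apply, smul_apply, smul_eq_mul]
  ring

end Jacobiator

section Splitting

variable {N : ℕ}

noncomputable def XcL (N : ℕ) : ((Fin N ⊕ Fin N) → ℝ) →L[ℝ] (Fin N → ℝ) :=
  ContinuousLinearMap.pi fun i => ContinuousLinearMap.proj (Sum.inl i)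

noncomputable def YcL (N : ℕ) : ((Fin N ⊕ Fin N) → ℝ) →L[ℝ] (Fin N → ℝ) :=
  ContinuousLinearMap.pi fun i => ContinuousLinearMap.proj (Sum.inr i)

@[simp] lemma coe_XcL : ⇑(XcL N) = Xc := rfl

@[simp] lemma coe_YcL : ⇑(YcL N) = Yc := rfl

@[simp] lemma Xc_single_inl (s : Fin N) : Xc (Pi.single (Sum.inl s) (1 : ℝ)) = Pi.single s 1 := by
  ext i; simp [Xc, Pi.single_apply]

@[simp] lemma Xc_single_inr (s : Fin N) : Xc (Pi.single (Sum.inr s) (1 : ℝ)) = 0 := by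
  ext i; simp [Xc]

@[simp] lemma Yc_single_inl (s : Fin N) : Yc (Pi.single (Sum.inl s) (1 : ℝ)) = 0 := by
  ext i; simp [Yc]

@[simp] lemma Yc_single_inr (s : Fin N) : Yc (Pi.single (Sum.inr s) (1 : ℝ)) = Pi.single s 1 := by
  ext i; simp [Yc, Pi.single_apply]

lemma ContDiff.comp_Xc {F : Type*} [NormedAddCommGroup F] [NormedSpace ℝ F]
    {n : WithTop ℕ∞} {f : (Fin N → ℝ) → F} (hf : ContDiff ℝ n f) :
    ContDiff ℝ n fun z : (Fin N ⊕ Fin N) → ℝ => f (Xc z) :=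
  hf.comp (XcL N).contDiff

variable {f : (Fin N → ℝ) → ℝ}

lemma pd_comp_Xc (S : Fin N ⊕ Fin N) (z : (Fin N ⊕ Fin N) → ℝ)
    (hf : DifferentiableAt ℝ f (Xc z)) :
    pd S (fun w => f (Xc w)) z = fderiv ℝ f (Xc z) (Xc (Pi.single S 1)) := by
  have : HasFDerivAt (fun w => f (Xc w)) ((fderiv ℝ f (Xc z)).comp (XcL N)) z :=
    hf.hasFDerivAt.comp z (XcL N).hasFDerivAt
  rw [pd, this.fderiv]
  rfl

lemma pd_fderiv_Xc_Yc (S : Fin N ⊕ Fin N) (z : (Fin N ⊕ Fin N) → ℝ) (hf : ContDiff ℝ 2 f) :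
    pd S (fun w => fderiv ℝ f (Xc w) (Yc w)) z
      = fderiv ℝ f (Xc z) (Yc (Pi.single S 1))
        + fderiv ℝ (fun x => fderiv ℝ f x (Xc (Pi.single S 1))) (Xc z) (Yc z) := by
  have hd : Differentiable ℝ (fderiv ℝ f) :=
    (hf.fderiv_right (m := 1) le_rfl).differentiable one_ne_zero
  have hsymm : IsSymmSndFDerivAt ℝ f (Xc z) := hf.contDiffAt.isSymmSndFDerivAt (by simp)
  have hswap : ∀ a b, fderiv ℝ (fun x => fderiv ℝ f x a) (Xc z) b
      = fderiv ℝ (fderiv ℝ f) (Xc z) a b := by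
    intro a b
    rw [fderiv_clm_apply (hd _) (differentiableAt_const a), hsymm.eq]
    simp
  have hc : HasFDerivAt (fun w => fderiv ℝ f (Xc w))
      ((fderiv ℝ (fderiv ℝ f) (Xc z)).comp (XcL N)) z :=
    (hd _).hasFDerivAt.comp z (XcL N).hasFDerivAt
  have : HasFDerivAt (fun w => fderiv ℝ f (Xc w) (Yc w))
      ((fderiv ℝ f (Xc z)).comp (YcL N)
        + ((fderiv ℝ (fderiv ℝ f) (Xc z)).comp (XcL N)).flip (Yc z)) z :=
    hc.clm_apply (YcL N).hasFDerivAt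
  rw [pd, this.fderiv, hswap]
  simp

end Splitting

noncomputable def deformedTangentLift {N : ℕ} (π : (Fin N → ℝ) → Matrix (Fin N) (Fin N) ℝ)
    (p : Fin N) (c : (Fin N → ℝ) → ℝ) (z : (Fin N ⊕ Fin N) → ℝ) :
    Matrix (Fin N ⊕ Fin N) (Fin N ⊕ Fin N) ℝ :=
  Matrix.fromBlocks 0
    (π (Xc z) + c (Xc z) • Matrix.single p p (1 : ℝ))
    (π (Xc z) - c (Xc z) • Matrix.single p p (1 : ℝ))
    (∑ s, Yc z s • pdMat s π (Xc z))

namespace deformedTangentLift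

variable {N : ℕ} {π : (Fin N → ℝ) → Matrix (Fin N) (Fin N) ℝ} {p : Fin N}
  {c : (Fin N → ℝ) → ℝ} (z : (Fin N ⊕ Fin N) → ℝ) (i j k : Fin N) (S : Fin N ⊕ Fin N)

@[simp] lemma apply_inl_inl : deformedTangentLift π p c z (.inl i) (.inl j) = 0 := rfl

/- `E_pp` is written as `e eᵀ` with `e = Pi.single p 1`, so that `ring` handles products of
its entries. -/
@[simp] lemma apply_inl_inr : deformedTangentLift π p c z (.inl i) (.inr j)
    = π (Xc z) i j
      + c (Xc z) * ((Pi.single p 1 : Fin N → ℝ) i * (Pi.single p 1 : Fin N → ℝ) j) := by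
  simp only [deformedTangentLift, Matrix.fromBlocks_apply₁₂, Matrix.add_apply, Matrix.smul_apply,
    smul_eq_mul, Matrix.single_eq_single_vecMulVec_single, Matrix.vecMulVec_apply]

@[simp] lemma apply_inr_inl : deformedTangentLift π p c z (.inr i) (.inl j)
    = π (Xc z) i j
      - c (Xc z) * ((Pi.single p 1 : Fin N → ℝ) i * (Pi.single p 1 : Fin N → ℝ) j) := by
  simp only [deformedTangentLift, Matrix.fromBlocks_apply₂₁, Matrix.sub_apply, Matrix.smul_apply,
    smul_eq_mul, Matrix.single_eq_single_vecMulVec_single, Matrix.vecMulVec_apply]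

@[simp] lemma apply_inr_inr : deformedTangentLift π p c z (.inr i) (.inr j)
    = fderiv ℝ (fun x => π x i j) (Xc z) (Yc z) := by
  simp [deformedTangentLift, pdMat, Matrix.sum_apply, ← sum_mul_pd]

@[simp] lemma pd_apply_inl_inl :
    pd S (fun w => deformedTangentLift π p c w (.inl i) (.inl j)) z = 0 := by
  simp [pd]

lemma pd_apply_inl_inr (hπ : Differentiable ℝ fun x => π x i j) (hc : Differentiable ℝ c) :
    pd S (fun w => deformedTangentLift π p c w (.inl i) (.inr j)) z
      = fderiv ℝ (fun x => π x i j) (Xc z) (Xc (Pi.single S 1))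
        + fderiv ℝ c (Xc z) (Xc (Pi.single S 1))
          * ((Pi.single p 1 : Fin N → ℝ) i * (Pi.single p 1 : Fin N → ℝ) j) := by
  simp only [apply_inl_inr]
  rw [pd_comp_Xc (f := fun x => π x i j + c x * _) S z (by fun_prop),
    fderiv_fun_add (hπ _) ((hc _).mul_const _), fderiv_mul_const (hc _)]
  simp [mul_comm]

lemma pd_apply_inr_inl (hπ : Differentiable ℝ fun x => π x i j) (hc : Differentiable ℝ c) :
    pd S (fun w => deformedTangentLift π p c w (.inr i) (.inl j)) z
      = fderiv ℝ (fun x => π x i j) (Xc z) (Xc (Pi.single S 1))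
        - fderiv ℝ c (Xc z) (Xc (Pi.single S 1))
          * ((Pi.single p 1 : Fin N → ℝ) i * (Pi.single p 1 : Fin N → ℝ) j) := by
  simp only [apply_inr_inl]
  rw [pd_comp_Xc (f := fun x => π x i j - c x * _) S z (by fun_prop),
    fderiv_fun_sub (hπ _) ((hc _).mul_const _), fderiv_mul_const (hc _)]
  simp [mul_comm]

lemma pd_apply_inr_inr (hπ : ContDiff ℝ 2 fun x => π x i j) :
    pd S (fun w => deformedTangentLift π p c w (.inr i) (.inr j)) z
      = fderiv ℝ (fun x => π x i j) (Xc z) (Yc (Pi.single S 1))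
        + fderiv ℝ (fun x => fderiv ℝ (fun y => π y i j) x (Xc (Pi.single S 1))) (Xc z) (Yc z) := by
  simp only [apply_inr_inr]
  exact pd_fderiv_Xc_Yc S z hπ

lemma contDiff_apply (hπ : IsPoissonTensor π) (hc : IsCasimir π c) (I J : Fin N ⊕ Fin N) :
    ContDiff ℝ ∞ fun z => deformedTangentLift π p c z I J := by
  rcases I with i | i <;> rcases J with j | j <;>
    simp only [apply_inl_inl, apply_inl_inr, apply_inr_inl, apply_inr_inr]
  · exact contDiff_const
  · exact (hπ.contDiff i j).comp_Xc.add (hc.contDiff.comp_Xc.mul contDiff_const)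
  · exact (hπ.contDiff i j).comp_Xc.sub (hc.contDiff.comp_Xc.mul contDiff_const)
  · exact (contDiff_infty_iff_fderiv.1 (hπ.1 i j)).2.comp_Xc.clm_apply (YcL N).contDiff

lemma apply_swap (hπ : IsPoissonTensor π) (I J : Fin N ⊕ Fin N) :
    deformedTangentLift π p c z J I = -deformedTangentLift π p c z I J := by
  rcases I with i | i <;> rcases J with j | j
  · simp
  · simp only [apply_inl_inr, apply_inr_inl, hπ.apply_swap _ i j]; ring
  · simp only [apply_inl_inr, apply_inr_inl, hπ.apply_swap _ i j]; ring
  · simp only [apply_inr_inr, show (fun x => π x j i) = fun x => -π x i j from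
      funext fun x => hπ.apply_swap x i j, fderiv_fun_neg, neg_apply]

lemma jacobiator_inl_inl_inl :
    jacobiator (deformedTangentLift π p c) z (.inl i) (.inl j) (.inl k) = 0 := by
  simp only [jacobiator, pd_apply_inl_inl]
  simp

lemma jacobiator_inl_inl_inr (hπ : IsPoissonTensor π) (hc : IsCasimir π c) :
    jacobiator (deformedTangentLift π p c) z (.inl i) (.inl j) (.inr k) = 0 := by
  have hπd : ∀ a b, Differentiable ℝ fun x => π x a b :=
    fun a b => (hπ.contDiff a b).differentiable one_ne_zero
  have hcd : Differentiable ℝ c := hc.contDiff.differentiable one_ne_zero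
  simp only [jacobiator, Fintype.sum_sum_type, pd_apply_inl_inl,
    pd_apply_inl_inr _ _ _ _ (hπd _ _) hcd, pd_apply_inr_inl _ _ _ _ (hπd _ _) hcd]
  simp

lemma jacobiator_inl_inr_inr (hπ : IsPoissonTensor π)
    (hp : ∀ x i j, pd p (fun y => π y i j) x = 0) (hc : IsCasimir π c) :
    jacobiator (deformedTangentLift π p c) z (.inl i) (.inr j) (.inr k) = 0 := by
  have hπd : ∀ a b, Differentiable ℝ fun x => π x a b :=
    fun a b => (hπ.contDiff a b).differentiable one_ne_zero
  have hcd : Differentiable ℝ c := hc.contDiff.differentiable one_ne_zero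
  simp only [jacobiator, Fintype.sum_sum_type, pd_apply_inl_inr _ _ _ _ (hπd _ _) hcd,
    pd_apply_inr_inl _ _ _ _ (hπd _ _) hcd, pd_apply_inr_inr _ _ _ _ (hπ.contDiff _ _)]
  simp only [apply_inl_inl, apply_inl_inr, apply_inr_inl, apply_inr_inr, Xc_single_inl,
    Xc_single_inr, Yc_single_inl, Yc_single_inr, map_zero, fderiv_apply_single_eq_pd,
    fderiv_fun_const, Pi.zero_apply, zero_apply, sub_self, zero_mul, mul_zero, add_zero, zero_add]
  set x := Xc z
  set e : Fin N → ℝ := Pi.single p 1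
  have hJ : ∑ s, (pd s (fun y => π y i j) x * π x s k + pd s (fun y => π y k i) x * π x s j
      + pd s (fun y => π y j k) x * π x s i) = 0 := hπ.jacobiator_eq_zero x i j k
  have hpe : ∀ a b, ∑ s, e s * pd s (fun y => π y a b) x = 0 := fun a b => by
    rw [sum_mul_pd]; exact hp x a b
  have hcas : ∀ a, ∑ s, pd s c x * π x s a = 0 := hc.2 x
  rw [← Finset.sum_add_distrib]
  calc _ = ∑ s, ((pd s (fun y => π y i j) x * π x s k + pd s (fun y => π y k i) x * π x s j
          + pd s (fun y => π y j k) x * π x s i)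
        + c x * (e k * (e s * pd s (fun y => π y i j) x) + e j * (e s * pd s (fun y => π y k i) x)
          - e i * (e s * pd s (fun y => π y j k) x))
        + e i * e j * (pd s c x * π x s k) - e k * e i * (pd s c x * π x s j)) :=
        Finset.sum_congr rfl fun s _ => by ring
    _ = 0 := by
      simp only [Finset.sum_add_distrib, Finset.sum_sub_distrib, ← Finset.mul_sum, hJ, hpe, hcas]
      ring

lemma jacobiator_inr_inr_inr (hπ : IsPoissonTensor π)
    (hp : ∀ x i j, pd p (fun y => π y i j) x = 0) :
    jacobiator (deformedTangentLift π p c) z (.inr i) (.inr j) (.inr k) = 0 := by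
  simp only [jacobiator, Fintype.sum_sum_type, pd_apply_inr_inr _ _ _ _ (hπ.contDiff _ _)]
  simp only [apply_inl_inr, apply_inr_inr, Xc_single_inl, Xc_single_inr, Yc_single_inl,
    Yc_single_inr, map_zero, fderiv_apply_single_eq_pd, fderiv_fun_const, Pi.zero_apply,
    zero_apply, add_zero, zero_add]
  set x := Xc z
  set y := Yc z
  set e : Fin N → ℝ := Pi.single p 1
  have hDJ := fderiv_jacobiator_apply (fun a b => hπ.contDiff a b) x y i j k
  rw [show (fun x => jacobiator π x i j k) = fun _ => 0 from
      funext fun x => hπ.jacobiator_eq_zero x i j k,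
    fderiv_fun_const, Pi.zero_apply, zero_apply] at hDJ
  have hpe : ∀ a b, ∑ s, e s * fderiv ℝ (fun x => pd s (fun y => π y a b) x) x y = 0 :=
    fun a b => by
      simp [e, Pi.single_apply, show pd p (fun y => π y a b) = fun _ => 0 from
        funext fun x => hp x a b]
  rw [← Finset.sum_add_distrib]
  calc _ = ∑ s, ((fderiv ℝ (pd s fun y => π y i j) x y * π x s k
          + pd s (fun y => π y i j) x * fderiv ℝ (fun y => π y s k) x y
        + (fderiv ℝ (pd s fun y => π y k i) x y * π x s j
          + pd s (fun y => π y k i) x * fderiv ℝ (fun y => π y s j) x y)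
        + (fderiv ℝ (pd s fun y => π y j k) x y * π x s i
          + pd s (fun y => π y j k) x * fderiv ℝ (fun y => π y s i) x y))
        + c x * (e k * (e s * fderiv ℝ (fun x => pd s (fun y => π y i j) x) x y)
          + e j * (e s * fderiv ℝ (fun x => pd s (fun y => π y k i) x) x y)
          + e i * (e s * fderiv ℝ (fun x => pd s (fun y => π y j k) x) x y))) :=
        Finset.sum_congr rfl fun s _ => by ring
    _ = 0 := by
      simp only [Finset.sum_add_distrib, ← Finset.mul_sum, ← hDJ, hpe]
      ring

lemma jacobiator_eq_zero (hπ : IsPoissonTensor π)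
    (hp : ∀ x i j, pd p (fun y => π y i j) x = 0) (hc : IsCasimir π c) (I J K : Fin N ⊕ Fin N) :
    jacobiator (deformedTangentLift π p c) z I J K = 0 := by
  rcases I with i | i <;> rcases J with j | j <;> rcases K with k | k
  · exact jacobiator_inl_inl_inl z i j k
  · exact jacobiator_inl_inl_inr z i j k hπ hc
  · rw [jacobiator_cycle, jacobiator_cycle]
    exact jacobiator_inl_inl_inr z k i j hπ hc
  · exact jacobiator_inl_inr_inr z i j k hπ hp hc
  · rw [jacobiator_cycle]
    exact jacobiator_inl_inl_inr z j k i hπ hc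
  · rw [jacobiator_cycle]
    exact jacobiator_inl_inr_inr z j k i hπ hp hc
  · rw [jacobiator_cycle, jacobiator_cycle]
    exact jacobiator_inl_inr_inr z k i j hπ hp hc
  · exact jacobiator_inr_inr_inr z i j k hπ hp

end deformedTangentLift

theorem stmt3_general {N : ℕ}
    (π : (Fin N → ℝ) → Matrix (Fin N) (Fin N) ℝ) (hπ : IsPoissonTensor π)
    (p : Fin N) (hp : ∀ x i j, pd p (fun y => π y i j) x = 0)
    (c : (Fin N → ℝ) → ℝ) (hc : IsCasimir π c) :
    IsPoissonTensor (fun z : (Fin N ⊕ Fin N) → ℝ =>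
      Matrix.fromBlocks
        0
        (π (Xc z) + c (Xc z) • Matrix.single p p (1 : ℝ))
        (π (Xc z) - c (Xc z) • Matrix.single p p (1 : ℝ))
        (∑ s, Yc z s • pdMat s π (Xc z))) :=
  isPoissonTensor_iff.2 ⟨deformedTangentLift.contDiff_apply hπ hc,
    fun z => deformedTangentLift.apply_swap z hπ,
    fun z => deformedTangentLift.jacobiator_eq_zero z hπ hp hc⟩

/-- the deformed tangent lift `Π_{TM,c(x)}` is a Poisson tensor on `ℝ^{2N}`. -/
theorem stmt3 {N : ℕ} (hN : 1 ≤ N)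
    (π : (Fin N → ℝ) → Matrix (Fin N) (Fin N) ℝ) (hπ : IsPoissonTensor π)
    (p : Fin N) (hp : ∀ x i j, pd p (fun y => π y i j) x = 0)
    (c : (Fin N → ℝ) → ℝ) (hc : IsCasimir π c) :
    IsPoissonTensor (fun z : (Fin N ⊕ Fin N) → ℝ =>
      Matrix.fromBlocks
        0
        (π (Xc z) + c (Xc z) • Matrix.single p p (1 : ℝ))
        (π (Xc z) - c (Xc z) • Matrix.single p p (1 : ℝ))
        (∑ s, Yc z s • pdMat s π (Xc z))) :=
  stmt3_general π hπ p hp c hc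
end

section
/- Let π be a linear Poisson tensor on ℝ^N that does not depend on the variable x_p for some fixed 1 ≤ p ≤ N, and let c be a linear Casimir function for π. Then for every λ ∈ ℝ the 2N×2N matrix field on ℝ^{2N} with blocks Π^{xx}(x,y) = λ·π(x), Π^{xy}(x,y) = π(x) + c(y)·E_pp, Π^{yx}(x,y) = π(x) − c(y)·E_pp, Π^{yy}(x,y) = π(y) is a Poisson tensor on ℝ^{2N}. -/
/-!
All entries of the block tensor are linear in `z = (x, y)`, so `∂Q_{IJ}/∂z_σ` is a constant
coefficient and the Jacobi condition becomes an identity between these coefficients and `Q`.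
Block by block, this Jacobiator is `λ²`, `λ` or `1` times the Jacobiator of `π` at `x` or `y`,
plus terms coming from `c(y) E_pp`. Those vanish: the coefficients of `x_p` in `π` are zero,
the coefficient vector `a` of `c` satisfies `a ᵥ* π = 0` because `c` is a Casimir, and the two
remaining terms, both multiples of `[i = j = k = p]`, cancel.
-/

open scoped ContDiff

/-- A linear function `c(x) = ∑ s, a_s x_s`. -/
def IsLinearFun {N : ℕ} (c : (Fin N → ℝ) → ℝ) : Prop :=
  ∃ a : Fin N → ℝ, ∀ x, c x = ∑ s, a s * x s

/-- A linear (Lie–Poisson) tensor: `π_{ij}(x) = ∑ n, c^n_{ij} x_n`. -/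
def IsLinearTensor {N : ℕ} (π : (Fin N → ℝ) → Matrix (Fin N) (Fin N) ℝ) : Prop :=
  ∃ C : Fin N → Fin N → Fin N → ℝ, ∀ x i j, π x i j = ∑ n, C i j n * x n

open Matrix

section LinearForms

variable {ι : Type} [Fintype ι] {A : ι → ℝ} {f : (ι → ℝ) → ℝ}

theorem eq_coe_sum_smul_proj (hf : ∀ x, f x = A ⬝ᵥ x) :
    f = ⇑(∑ n, A n • ContinuousLinearMap.proj (R := ℝ) (φ := fun _ : ι => ℝ) n) :=
  funext fun x => by simp [hf, dotProduct]

theorem pd_eq_of_eq_dotProduct [DecidableEq ι] (hf : ∀ x, f x = A ⬝ᵥ x) (s : ι) (x : ι → ℝ) :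
    pd s f x = A s := by
  rw [pd, eq_coe_sum_smul_proj hf, ContinuousLinearMap.fderiv]
  simp [Pi.single_apply]

theorem contDiff_of_eq_dotProduct (hf : ∀ x, f x = A ⬝ᵥ x) : ContDiff ℝ ∞ f := by
  rw [eq_coe_sum_smul_proj hf]
  exact ContinuousLinearMap.contDiff _

end LinearForms

section LinearTensors

variable {ι : Type} [Fintype ι]

/-- The Jacobi sum of `IsPoissonTensor` with `∂Q_{IJ}/∂z_σ` replaced by `A I J σ`. -/
def linearJacobiator (A : ι → ι → ι → ℝ) (Q : (ι → ℝ) → Matrix ι ι ℝ) (z : ι → ℝ)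
    (I J K : ι) : ℝ :=
  (A I J ᵥ* Q z) K + (A K I ᵥ* Q z) J + (A J K ᵥ* Q z) I

theorem isPoissonTensor_iff_of_linear [DecidableEq ι] {A : ι → ι → ι → ℝ}
    {Q : (ι → ℝ) → Matrix ι ι ℝ} (hQ : ∀ z I J, Q z I J = A I J ⬝ᵥ z) :
    IsPoissonTensor Q ↔
      (∀ z, (Q z)ᵀ = -Q z) ∧ ∀ z I J K, linearJacobiator A Q z I J K = 0 := by
  simp only [IsPoissonTensor, pd_eq_of_eq_dotProduct (hQ · _ _), linearJacobiator, vecMul,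
    dotProduct, ← Finset.sum_add_distrib, ← Matrix.ext_iff, transpose_apply]
  exact ⟨fun h => h.2, fun h => ⟨fun I J => contDiff_of_eq_dotProduct (hQ · I J), h⟩⟩

end LinearTensors

section BlockTensor

variable {N : ℕ} (π : (Fin N → ℝ) → Matrix (Fin N) (Fin N) ℝ) (c : (Fin N → ℝ) → ℝ)
  (C : Fin N → Fin N → Fin N → ℝ) (a : Fin N → ℝ) (p : Fin N) (lam : ℝ)

def blockTensor (z : (Fin N ⊕ Fin N) → ℝ) : Matrix (Fin N ⊕ Fin N) (Fin N ⊕ Fin N) ℝ :=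
  fromBlocks (lam • π (Xc z)) (π (Xc z) + c (Yc z) • single p p (1 : ℝ))
    (π (Xc z) - c (Yc z) • single p p (1 : ℝ)) (π (Yc z))

def blockCoeff : Fin N ⊕ Fin N → Fin N ⊕ Fin N → Fin N ⊕ Fin N → ℝ
  | .inl i, .inl j => Sum.elim (lam • C i j) 0
  | .inl i, .inr j => Sum.elim (C i j) (single p p (1 : ℝ) i j • a)
  | .inr i, .inl j => Sum.elim (C i j) (-single p p (1 : ℝ) i j • a)
  | .inr i, .inr j => Sum.elim 0 (C i j)

variable {π c C a}

theorem sumElim_dotProduct (u v : Fin N → ℝ) (z : (Fin N ⊕ Fin N) → ℝ) :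
    Sum.elim u v ⬝ᵥ z = u ⬝ᵥ Xc z + v ⬝ᵥ Yc z := by
  simp [dotProduct, Fintype.sum_sum_type, Xc, Yc]

theorem blockTensor_apply (hC : ∀ x i j, π x i j = C i j ⬝ᵥ x) (ha : ∀ x, c x = a ⬝ᵥ x)
    (z : (Fin N ⊕ Fin N) → ℝ) (I J : Fin N ⊕ Fin N) :
    blockTensor π c p lam z I J = blockCoeff C a p lam I J ⬝ᵥ z := by
  rcases I with i | i <;> rcases J with j | j <;>
    simp only [blockTensor, blockCoeff, sumElim_dotProduct, fromBlocks_apply₁₁,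
      fromBlocks_apply₁₂, fromBlocks_apply₂₁, fromBlocks_apply₂₂, Matrix.add_apply,
      Matrix.sub_apply, Matrix.smul_apply, smul_eq_mul, hC, ha, smul_dotProduct,
      zero_dotProduct] <;>
    ring

theorem blockTensor_transpose (hanti : ∀ x, (π x)ᵀ = -π x) (z : (Fin N ⊕ Fin N) → ℝ) :
    (blockTensor π c p lam z)ᵀ = -blockTensor π c p lam z := by
  simp only [blockTensor, fromBlocks_transpose, fromBlocks_neg, transpose_add, transpose_sub,
    transpose_smul, transpose_single, hanti]
  congr 1 <;> module

theorem linearJacobiator_blockTensor (hjac : ∀ x i j k, linearJacobiator C π x i j k = 0)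
    (hcas : ∀ x, a ᵥ* π x = 0) (hCp : ∀ i j, C i j p = 0) (z : (Fin N ⊕ Fin N) → ℝ)
    (I J K : Fin N ⊕ Fin N) :
    linearJacobiator (blockCoeff C a p lam) (blockTensor π c p lam) z I J K = 0 := by
  simp only [linearJacobiator] at hjac
  rcases I with i | i <;> rcases J with j | j <;> rcases K with k | k <;>
    simp only [linearJacobiator, blockCoeff, blockTensor, vecMul_fromBlocks, Sum.elim_comp_inl,
      Sum.elim_comp_inr, Sum.elim_inl, Sum.elim_inr, vecMul_add, vecMul_sub, vecMul_smul,
      smul_vecMul, zero_vecMul, hcas, single_eq_single_vecMulVec_single, vecMul_vecMulVec,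
      dotProduct_single_one, vecMulVec_apply, hCp, zero_smul, Pi.add_apply,
      Pi.sub_apply, Pi.smul_apply, Pi.zero_apply, smul_eq_mul, smul_zero, add_zero]
  · linear_combination lam ^ 2 * hjac (Xc z) i j k
  · linear_combination lam * hjac (Xc z) i j k
  · linear_combination lam * hjac (Xc z) i j k
  · linear_combination hjac (Xc z) i j k
  · linear_combination lam * hjac (Xc z) i j k
  · linear_combination hjac (Xc z) i j k
  · linear_combination hjac (Xc z) i j k
  · linear_combination hjac (Yc z) i j k

end BlockTensor

theorem stmt10_general {N : ℕ}
    (π : (Fin N → ℝ) → Matrix (Fin N) (Fin N) ℝ)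
    (hπ : IsPoissonTensor π) (hlin : IsLinearTensor π)
    (p : Fin N) (hp : ∀ x i j, pd p (fun y => π y i j) x = 0)
    (c : (Fin N → ℝ) → ℝ) (hc : IsCasimir π c) (hclin : IsLinearFun c)
    (lam : ℝ) :
    IsPoissonTensor (fun z : (Fin N ⊕ Fin N) → ℝ =>
      Matrix.fromBlocks
        (lam • π (Xc z))
        (π (Xc z) + c (Yc z) • Matrix.single p p (1 : ℝ))
        (π (Xc z) - c (Yc z) • Matrix.single p p (1 : ℝ))
        (π (Yc z))) := by
  obtain ⟨C, hC⟩ := hlin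
  obtain ⟨a, ha⟩ := hclin
  obtain ⟨hanti, hjac⟩ := (isPoissonTensor_iff_of_linear hC).1 hπ
  have hcas : ∀ x, a ᵥ* π x = 0 := fun x => funext fun j => by
    simpa only [pd_eq_of_eq_dotProduct ha, vecMul, dotProduct, Pi.zero_apply] using hc.2 x j
  have hCp : ∀ i j, C i j p = 0 := fun i j => by
    simpa only [pd_eq_of_eq_dotProduct (hC · i j)] using hp 0 i j
  exact (isPoissonTensor_iff_of_linear (blockTensor_apply p lam hC ha)).2
    ⟨blockTensor_transpose p lam hanti, linearJacobiator_blockTensor p lam hjac hcas hCp⟩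

/-- for a linear Poisson tensor `π` independent of `x_p` and a linear
Casimir `c`, the tensor `[[λπ(x), π(x)+c(y)E_pp],[π(x)−c(y)E_pp, π(y)]]` is Poisson. -/
theorem stmt10 {N : ℕ} (hN : 1 ≤ N)
    (π : (Fin N → ℝ) → Matrix (Fin N) (Fin N) ℝ)
    (hπ : IsPoissonTensor π) (hlin : IsLinearTensor π)
    (p : Fin N) (hp : ∀ x i j, pd p (fun y => π y i j) x = 0)
    (c : (Fin N → ℝ) → ℝ) (hc : IsCasimir π c) (hclin : IsLinearFun c)
    (lam : ℝ) :
    IsPoissonTensor (fun z : (Fin N ⊕ Fin N) → ℝ =>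
      Matrix.fromBlocks
        (lam • π (Xc z))
        (π (Xc z) + c (Yc z) • Matrix.single p p (1 : ℝ))
        (π (Xc z) - c (Yc z) • Matrix.single p p (1 : ℝ))
        (π (Yc z))) :=
  stmt10_general π hπ hlin p hp c hc hclin lam
end
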